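/- For every nonzero ideal I of E, the annihilator Ann_E(φ[I]) := { u ∈ E : u(X) ∈ J_I } equals (k{τ}I) ∩ D, which also equals (k{τ}I) ∩ E. Consequently, I satisfies (k{τ}I) ∩ D = I if and only if I = Ann_E(φ[I]); that is, the two definitions of a kernel ideal agree. -/

import Mathlib

/- Framework: Drinfeld modules over a finite A-field `k`, realized concretely.
`k{τ}` is the subring of additive endomorphisms of an algebraic closure of `k`
generated by the `q`-power Frobenius `τ` and multiplications by elements of `k`. -/

open Polynomial

noncomputable section

namespace Drinfeld

variable (p m : ℕ) [Fact p.Prime]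
variable (Fq k : Type) [Field Fq] [Fintype Fq] [Field k] [Fintype k] [CharP k p]

/-- A fixed algebraic closure of `k`. -/
abbrev Kb := AlgebraicClosure k

variable (hFq : Fintype.card Fq = p ^ m)

/-- The `q`-power Frobenius `τ : x ↦ x^q` as an additive endomorphism of `Kb k`. -/
def tau : AddMonoid.End (Kb k) where
  toFun x := x ^ Fintype.card Fq
  map_zero' := zero_pow Fintype.card_ne_zero
  map_add' x y := by
    haveI : CharP (Kb k) p :=
      charP_of_injective_algebraMap (algebraMap k (Kb k)).injective p
    simp only [hFq]
    exact add_pow_char_pow x y p m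

/-- Multiplication by `c ∈ k` as an additive endomorphism of `Kb k`. -/
def ml (c : k) : AddMonoid.End (Kb k) :=
  AddMonoidHom.mulLeft (algebraMap k (Kb k) c)

/-- The twisted polynomial ring `k{τ}`. -/
def skewPoly : Subring (AddMonoid.End (Kb k)) :=
  Subring.closure (insert (tau p m Fq k hFq) (Set.range (ml k)))

/-- The additive endomorphism `Σᵢ cᵢ ∘ τ^i` attached to a finitely supported
family of coefficients `c : ℕ →₀ k`. -/
def ofCoeffs (c : ℕ →₀ k) : AddMonoid.End (Kb k) :=
  c.sum fun i a => ml k a * tau p m Fq k hFq ^ i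

/-- A Drinfeld module of rank `r` over the `A`-field `(k, γ)`:
a ring homomorphism `φ : A = Fq[T] → k{τ}` with
`φ_a = γ(a) + g₁(a) τ + ⋯ + g_{r·deg a}(a) τ^{r·deg a}` and `g_{r · deg a}(a) ≠ 0`. -/
structure DrinfeldModule (γ : Polynomial Fq →+* k) (r : ℕ) : Type where
  toRingHom : Polynomial Fq →+* AddMonoid.End (Kb k)
  coeffs : Polynomial Fq → ℕ →₀ k
  eq_ofCoeffs : ∀ a, toRingHom a = ofCoeffs p m Fq k hFq (coeffs a)
  coeff_zero : ∀ a, coeffs a 0 = γ a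
  coeff_top : ∀ a, a ≠ 0 → coeffs a (r * a.natDegree) ≠ 0
  coeff_eq_zero : ∀ a i, r * a.natDegree < i → coeffs a i = 0

variable {γ : Polynomial Fq →+* k} {r : ℕ}

/-- The endomorphism ring `End_k(φ)`: the centralizer of `φ(A)` in `k{τ}`. -/
def EndRing (φ : DrinfeldModule p m Fq k hFq γ r) : Subring (AddMonoid.End (Kb k)) :=
  skewPoly p m Fq k hFq ⊓ Subring.centralizer (Set.range ⇑φ.toRingHom)

/-- `u` is an isogeny `φ → ψ`: a nonzero element of `k{τ}` with `u φ_a = ψ_a u`. -/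
def IsIsogeny (φ ψ : DrinfeldModule p m Fq k hFq γ r) (u : AddMonoid.End (Kb k)) : Prop :=
  u ≠ 0 ∧ u ∈ skewPoly p m Fq k hFq ∧ ∀ a, u * φ.toRingHom a = ψ.toRingHom a * u

/-- Two Drinfeld modules are isomorphic when some isogeny between them lies in `k^×`. -/
def Isomorphic (φ ψ : DrinfeldModule p m Fq k hFq γ r) : Prop :=
  ∃ c : k, c ≠ 0 ∧ ∀ a, ml k c * φ.toRingHom a = ψ.toRingHom a * ml k c

/-- The left ideal `k{τ}·s` of `k{τ}` generated by a subset `s`. -/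
def leftSpan (s : Set (AddMonoid.End (Kb k))) : AddSubgroup (AddMonoid.End (Kb k)) :=
  AddSubgroup.closure {y | ∃ w ∈ skewPoly p m Fq k hFq, ∃ x ∈ s, y = w * x}

/-- `u` generates the left ideal `k{τ}·s` of `k{τ}`: `k{τ}s = k{τ}u`.
(Such a `u = u_I` exists by the right division algorithm in `k{τ}`.) -/
def IsIdealGen (s : Set (AddMonoid.End (Kb k))) (u : AddMonoid.End (Kb k)) : Prop :=
  u ∈ skewPoly p m Fq k hFq ∧
    (leftSpan p m Fq k hFq s : Set (AddMonoid.End (Kb k))) =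
      {y | ∃ w ∈ skewPoly p m Fq k hFq, y = w * u}

/-- `I` is an ideal of the (commutative) subring `E` of `k{τ}`. -/
def IsIdealOf (E : Subring (AddMonoid.End (Kb k))) (I : Set (AddMonoid.End (Kb k))) : Prop :=
  I ⊆ E ∧ (0 : AddMonoid.End (Kb k)) ∈ I ∧
    (∀ x ∈ I, ∀ y ∈ I, x + y ∈ I) ∧ (∀ x ∈ I, -x ∈ I) ∧
    (∀ e ∈ E, ∀ x ∈ I, e * x ∈ I) ∧ (∀ e ∈ E, ∀ x ∈ I, x * e ∈ I)

/-- Membership in `D = End_k(φ) ⊗_A F = Frac(End_k(φ))` for an element of `k{τ}`: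
`x ∈ D` iff `x·φ_a ∈ End_k(φ)` for some nonzero `a ∈ A`, i.e. `x = e/φ_a`. -/
def MemD (φ : DrinfeldModule p m Fq k hFq γ r) (x : AddMonoid.End (Kb k)) : Prop :=
  ∃ a : Polynomial Fq, a ≠ 0 ∧ x * φ.toRingHom a ∈ EndRing p m Fq k hFq φ

/-- `I` is a kernel ideal: `(k{τ}I) ∩ D = I`. -/
def IsKernelIdeal (φ : DrinfeldModule p m Fq k hFq γ r)
    (I : Set (AddMonoid.End (Kb k))) : Prop :=
  {x | x ∈ leftSpan p m Fq k hFq I ∧ MemD p m Fq k hFq φ x} = I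

/-- The subring `A[π] = φ(A)[π]` of `k{τ}`, where `π = τ^n` is the Frobenius of `k`. -/
def ApirOp (n : ℕ) (φ : DrinfeldModule p m Fq k hFq γ r) :
    Subring (AddMonoid.End (Kb k)) :=
  Subring.closure (insert (tau p m Fq k hFq ^ n) (Set.range ⇑φ.toRingHom))

/-- `φ` has height `H` (relative to the monic generator `P` of `𝔭 = ker γ`):
the smallest `τ`-degree of a nonzero term of `φ_P` equals `H · deg P`, i.e. `φ_P` is
right-divisible by `τ^{H·deg P}` but not by `τ^{H·deg P + 1}`. -/
def HasHeight (φ : DrinfeldModule p m Fq k hFq γ r) (P : Polynomial Fq) (H : ℕ) : Prop :=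
  (∃ u ∈ skewPoly p m Fq k hFq,
      φ.toRingHom P = u * tau p m Fq k hFq ^ (H * P.natDegree)) ∧
    ¬∃ u ∈ skewPoly p m Fq k hFq,
      φ.toRingHom P = u * tau p m Fq k hFq ^ (H * P.natDegree + 1)

/-- `I = J·u` for some nonzero `u ∈ D = Frac(E)`, written as `u = e/φ_a` with `e ∈ E`,
`a ∈ A` both nonzero; equivalently `I·φ_a = J·e`. -/
def LinEquiv (φ : DrinfeldModule p m Fq k hFq γ r) (E : Subring (AddMonoid.End (Kb k)))
    (I J : Set (AddMonoid.End (Kb k))) : Prop :=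
  ∃ e ∈ E, e ≠ 0 ∧ ∃ a : Polynomial Fq, a ≠ 0 ∧
    (fun x => x * φ.toRingHom a) '' I = (fun y => y * e) '' J

/-- The additive polynomial `u(X) ∈ k[X]` attached to `u ∈ k{τ}` (the unique polynomial
inducing `u` on the algebraic closure, if it exists; junk value `0` otherwise). -/
def toPoly (u : AddMonoid.End (Kb k)) : Polynomial k :=
  letI := Classical.propDecidable (∃ P : Polynomial k, ∀ x : Kb k, Polynomial.aeval x P = u x)
  if h : ∃ P : Polynomial k, ∀ x : Kb k, Polynomial.aeval x P = u x then h.choose else 0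

end Drinfeld

namespace Drinfeld

section Aux
set_option linter.unusedSectionVars false

variable (p m : ℕ) [Fact p.Prime]
variable (Fq k : Type) [Field Fq] [Fintype Fq] [Field k] [Fintype k] [CharP k p]
variable (hFq : Fintype.card Fq = p ^ m)

/-- `u` is induced by the polynomial `P`. -/
def IndBy (u : AddMonoid.End (Kb k)) (P : Polynomial k) : Prop :=
  ∀ x : Kb k, Polynomial.aeval x P = u x

/-- `P` is a `q`-additive polynomial. -/
def IsAddPoly (P : Polynomial k) : Prop :=
  ∀ n ∈ P.support, ∃ j, n = Fintype.card Fq ^ j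

theorem charKb : CharP (Kb k) p :=
  charP_of_injective_algebraMap (algebraMap k (Kb k)).injective p

theorem two_le_q : 2 ≤ Fintype.card Fq := Fintype.one_lt_card

theorem tau_apply (x : Kb k) : tau p m Fq k hFq x = x ^ Fintype.card Fq := rfl

theorem tau_pow_apply (i : ℕ) (x : Kb k) :
    (tau p m Fq k hFq ^ i) x = x ^ Fintype.card Fq ^ i := by
  induction i generalizing x with
  | zero => simp
  | succ n ih =>
    have : (tau p m Fq k hFq ^ (n + 1)) x = (tau p m Fq k hFq ^ n) (tau p m Fq k hFq x) :=
      rfl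
    rw [this, ih, tau_apply, ← pow_mul, pow_succ, mul_comm (Fintype.card Fq ^ n)]

theorem ml_apply (c : k) (x : Kb k) : ml k c x = algebraMap k (Kb k) c * x := rfl

/-- Uniqueness of the inducing polynomial. -/
theorem indBy_unique {u : AddMonoid.End (Kb k)} {P Q : Polynomial k}
    (hP : IndBy k u P) (hQ : IndBy k u Q) : P = Q := by
  have hinj : Function.Injective (algebraMap k (Kb k)) := (algebraMap k (Kb k)).injective
  have : P.map (algebraMap k (Kb k)) = Q.map (algebraMap k (Kb k)) := by
    apply Polynomial.funext
    intro r
    rw [Polynomial.eval_map_algebraMap, Polynomial.eval_map_algebraMap, hP r, hQ r]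
  exact Polynomial.map_injective _ hinj this

theorem indBy_ext {u v : AddMonoid.End (Kb k)} {P : Polynomial k}
    (hu : IndBy k u P) (hv : IndBy k v P) : u = v := by
  refine AddMonoidHom.ext fun x => ?_; exact (hu x).symm.trans (hv x)

theorem indBy_zero : IndBy k (0 : AddMonoid.End (Kb k)) (0 : Polynomial k) := by
  intro x; simp

theorem indBy_add {u v : AddMonoid.End (Kb k)} {P Q : Polynomial k}
    (hu : IndBy k u P) (hv : IndBy k v Q) : IndBy k (u + v) (P + Q) := by
  intro x; simp [hu x, hv x]; rfl

theorem indBy_neg {u : AddMonoid.End (Kb k)} {P : Polynomial k}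
    (hu : IndBy k u P) : IndBy k (-u) (-P) := by
  intro x; simp [hu x]; rfl

theorem indBy_mul {u v : AddMonoid.End (Kb k)} {P Q : Polynomial k}
    (hu : IndBy k u P) (hv : IndBy k v Q) : IndBy k (u * v) (P.comp Q) := by
  intro x
  have : (u * v) x = u (v x) := rfl
  rw [this, Polynomial.aeval_comp, hv x, hu (v x)]

theorem indBy_eq_zero {u : AddMonoid.End (Kb k)} {P : Polynomial k}
    (hu : IndBy k u P) (h : u = 0) : P = 0 :=
  indBy_unique k (h ▸ hu) (indBy_zero k)

theorem indBy_toPoly {u : AddMonoid.End (Kb k)} {P : Polynomial k}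
    (hu : IndBy k u P) : toPoly k u = P := by
  classical
  have hex : ∃ P : Polynomial k, ∀ x : Kb k, Polynomial.aeval x P = u x := ⟨P, hu⟩
  have : toPoly k u = hex.choose := by
    rw [toPoly]
    simp [dif_pos hex]
  rw [this]
  exact indBy_unique k hex.choose_spec hu

end Aux

end Drinfeld
namespace Drinfeld

section Aux2
set_option linter.unusedSectionVars false

variable (p m : ℕ) [Fact p.Prime]
variable (Fq k : Type) [Field Fq] [Fintype Fq] [Field k] [Fintype k] [CharP k p]
variable (hFq : Fintype.card Fq = p ^ m)

theorem isAddPoly_zero : IsAddPoly Fq k (0 : Polynomial k) := by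
  intro n hn; simp at hn

theorem isAddPoly_add {P Q : Polynomial k} (hP : IsAddPoly Fq k P) (hQ : IsAddPoly Fq k Q) :
    IsAddPoly Fq k (P + Q) := by
  intro n hn
  rcases Finset.mem_union.mp (Polynomial.support_add hn) with h | h
  · exact hP n h
  · exact hQ n h

theorem isAddPoly_neg {P : Polynomial k} (hP : IsAddPoly Fq k P) :
    IsAddPoly Fq k (-P) := by
  intro n hn; rw [Polynomial.support_neg] at hn; exact hP n hn

theorem isAddPoly_monomial (c : k) (j : ℕ) :
    IsAddPoly Fq k (Polynomial.C c * Polynomial.X ^ (Fintype.card Fq ^ j)) := by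
  intro n hn
  have := Polynomial.support_C_mul_X_pow' (Fintype.card Fq ^ j) c hn
  simp at this
  exact ⟨j, this⟩

theorem isAddPoly_C_mul {P : Polynomial k} (c : k) (hP : IsAddPoly Fq k P) :
    IsAddPoly Fq k (Polynomial.C c * P) := by
  intro n hn
  apply hP n
  rw [Polynomial.mem_support_iff] at hn ⊢
  intro h; apply hn
  rw [Polynomial.coeff_C_mul, h, mul_zero]

/-- Writing `P` as the sum of its monomials. -/
theorem poly_as_sum (P : Polynomial k) :
    P = ∑ n ∈ P.support, Polynomial.C (P.coeff n) * Polynomial.X ^ n := by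
  conv_lhs => rw [Polynomial.as_sum_support P]
  refine Finset.sum_congr rfl fun n _ => ?_
  rw [Polynomial.C_mul_X_pow_eq_monomial]

/-- `q^e`-th power of a polynomial, coefficientwise. -/
theorem pow_char_pow_eq (P : Polynomial k) (e : ℕ) :
    P ^ (p ^ e) = ∑ n ∈ P.support, Polynomial.C ((P.coeff n) ^ (p ^ e)) *
      Polynomial.X ^ (n * p ^ e) := by
  haveI : CharP (Polynomial k) p := Polynomial.instCharP p  -- guess
  conv_lhs => rw [poly_as_sum k P]
  rw [sum_pow_char_pow]
  refine Finset.sum_congr rfl fun n _ => ?_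
  rw [mul_pow, ← Polynomial.C_pow, ← pow_mul]

include hFq in
theorem isAddPoly_pow_q {P : Polynomial k} (hP : IsAddPoly Fq k P) (e : ℕ) :
    IsAddPoly Fq k (P ^ (Fintype.card Fq ^ e)) := by
  rw [hFq, ← pow_mul, pow_char_pow_eq p k P (m * e)]
  intro n hn
  rw [Polynomial.mem_support_iff, Polynomial.finset_sum_coeff] at hn
  obtain ⟨i, hi, hni⟩ := Finset.exists_ne_zero_of_sum_ne_zero hn
  rw [Polynomial.coeff_C_mul, Polynomial.coeff_X_pow] at hni
  have h2 : n = i * p ^ (m * e) := by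
    by_contra hne
    rw [if_neg hne, mul_zero] at hni
    exact hni rfl
  obtain ⟨j, hj⟩ := hP i hi
  exact ⟨j + e, by rw [h2, hj, hFq, ← pow_mul, ← pow_add, ← Nat.mul_add, pow_mul]⟩

end Aux2

end Drinfeld
namespace Drinfeld

section Aux3
set_option linter.unusedSectionVars false
set_option maxHeartbeats 1000000

variable (p m : ℕ) [Fact p.Prime]
variable (Fq k : Type) [Field Fq] [Fintype Fq] [Field k] [Fintype k] [CharP k p]
variable (hFq : Fintype.card Fq = p ^ m)

theorem isAddPoly_sum {s : Finset ℕ} {f : ℕ → Polynomial k}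
    (h : ∀ n ∈ s, IsAddPoly Fq k (f n)) : IsAddPoly Fq k (∑ n ∈ s, f n) := by
  classical
  induction s using Finset.induction with
  | empty => simpa using isAddPoly_zero Fq k
  | insert a s hns ih =>
    rw [Finset.sum_insert hns]
    exact isAddPoly_add Fq k (h a (Finset.mem_insert_self a s))
      (ih fun n hn => h n (Finset.mem_insert_of_mem hn))

include hFq in
theorem isAddPoly_comp {P Q : Polynomial k} (hP : IsAddPoly Fq k P) (hQ : IsAddPoly Fq k Q) :
    IsAddPoly Fq k (P.comp Q) := by
  rw [Polynomial.comp_eq_sum_left, Polynomial.sum_def]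
  apply isAddPoly_sum
  intro n hn
  obtain ⟨j, hj⟩ := hP n hn
  rw [hj]
  exact isAddPoly_C_mul Fq k _ (isAddPoly_pow_q p m Fq k hFq hQ j)

theorem comp_mem_span {P Q : Polynomial k} (hP : IsAddPoly Fq k P) :
    P.comp Q ∈ Ideal.span {Q} := by
  rw [Polynomial.comp_eq_sum_left, Polynomial.sum_def]
  apply Ideal.sum_mem
  intro n hn
  obtain ⟨j, hj⟩ := hP n hn
  rw [Ideal.mem_span_singleton, hj]
  exact Dvd.dvd.mul_left (dvd_pow_self Q (pow_ne_zero j Fintype.card_ne_zero)) _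

/-- From an additive polynomial to an element of `k{τ}`. -/
theorem exists_skew_of_isAddPoly {P : Polynomial k} (hP : IsAddPoly Fq k P) :
    ∃ u ∈ skewPoly p m Fq k hFq, IndBy k u P := by
  classical
  refine ⟨∑ n ∈ P.support.attach,
    ml k (P.coeff n.1) * tau p m Fq k hFq ^ (hP n.1 n.2).choose, ?_, ?_⟩
  · apply Subring.sum_mem
    intro n _
    exact Subring.mul_mem _
      (Subring.subset_closure (Set.mem_insert_of_mem _ ⟨P.coeff n.1, rfl⟩))
      (Subring.pow_mem _ (Subring.subset_closure (Set.mem_insert _ _)) _)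
  · intro x
    have hsum : (∑ n ∈ P.support.attach,
        ml k (P.coeff n.1) * tau p m Fq k hFq ^ (hP n.1 n.2).choose) x
        = ∑ n ∈ P.support.attach,
          (AddMonoidHom.eval x) (ml k (P.coeff n.1) * tau p m Fq k hFq ^ (hP n.1 n.2).choose) :=
      map_sum (AddMonoidHom.eval x) _ P.support.attach
    rw [hsum]
    have : ∀ n ∈ P.support.attach,
        (AddMonoidHom.eval x) (ml k (P.coeff n.1) * tau p m Fq k hFq ^ (hP n.1 n.2).choose)
          = algebraMap k (Kb k) (P.coeff n.1) * x ^ n.1 := by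
      intro n _
      have h1 : (ml k (P.coeff n.1) * tau p m Fq k hFq ^ (hP n.1 n.2).choose) x
          = ml k (P.coeff n.1) ((tau p m Fq k hFq ^ (hP n.1 n.2).choose) x) := rfl
      have h2 := (hP n.1 n.2).choose_spec
      have h0 : (AddMonoidHom.eval x) (ml k (P.coeff n.1) * tau p m Fq k hFq ^ (hP n.1 n.2).choose)
          = (ml k (P.coeff n.1) * tau p m Fq k hFq ^ (hP n.1 n.2).choose) x := rfl
      rw [h0, h1, tau_pow_apply, ml_apply, ← h2]
    rw [Finset.sum_congr rfl this]
    rw [Polynomial.aeval_def, Polynomial.eval₂_eq_sum, Polynomial.sum_def,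
      ← Finset.sum_attach P.support fun n => algebraMap k (Kb k) (P.coeff n) * x ^ n]

include hFq in
theorem skew_isAddPoly {u : AddMonoid.End (Kb k)} (hu : u ∈ skewPoly p m Fq k hFq) :
    ∃ P, IsAddPoly Fq k P ∧ IndBy k u P := by
  induction hu using Subring.closure_induction with
  | mem x hx =>
    rcases hx with h | ⟨c, rfl⟩
    · refine ⟨Polynomial.C 1 * Polynomial.X ^ (Fintype.card Fq ^ 1),
        isAddPoly_monomial Fq k 1 1, ?_⟩
      intro z
      subst h
      simp [tau_apply, pow_one]
    · exact ⟨Polynomial.C c * Polynomial.X ^ (Fintype.card Fq ^ 0),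
        isAddPoly_monomial Fq k c 0, by intro z; simp [ml_apply]⟩
  | zero => exact ⟨0, isAddPoly_zero Fq k, indBy_zero k⟩
  | one =>
    refine ⟨Polynomial.C 1 * Polynomial.X ^ (Fintype.card Fq ^ 0),
      isAddPoly_monomial Fq k 1 0, ?_⟩
    intro z
    have h1 : (1 : AddMonoid.End (Kb k)) z = z := rfl
    rw [h1]; simp
  | add x y hx hy ihx ihy =>
    obtain ⟨P, hP, hiP⟩ := ihx; obtain ⟨Q, hQ, hiQ⟩ := ihy
    exact ⟨P + Q, isAddPoly_add Fq k hP hQ, indBy_add k hiP hiQ⟩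
  | neg x hx ihx =>
    obtain ⟨P, hP, hiP⟩ := ihx
    exact ⟨-P, isAddPoly_neg Fq k hP, indBy_neg k hiP⟩
  | mul x y hx hy ihx ihy =>
    obtain ⟨P, hP, hiP⟩ := ihx; obtain ⟨Q, hQ, hiQ⟩ := ihy
    exact ⟨P.comp Q, isAddPoly_comp p m Fq k hFq hP hQ, indBy_mul k hiP hiQ⟩

include hFq in
theorem mem_skew_of_indBy {u : AddMonoid.End (Kb k)} {P : Polynomial k}
    (hP : IsAddPoly Fq k P) (hu : IndBy k u P) : u ∈ skewPoly p m Fq k hFq := by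
  obtain ⟨v, hv, hiv⟩ := exists_skew_of_isAddPoly p m Fq k hFq hP
  rwa [indBy_ext k hu hiv]

end Aux3

end Drinfeld
namespace Drinfeld

section Aux4
set_option linter.unusedSectionVars false
set_option maxHeartbeats 1000000

variable (p m : ℕ) [Fact p.Prime]
variable (Fq k : Type) [Field Fq] [Fintype Fq] [Field k] [Fintype k] [CharP k p]
variable (hFq : Fintype.card Fq = p ^ m)

include hFq in
/-- Twisted (right) division for additive polynomials. -/
theorem twisted_div {f g : Polynomial k} (hf : IsAddPoly Fq k f) (hg : IsAddPoly Fq k g)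
    (hg0 : g ≠ 0) :
    ∃ h t : Polynomial k, IsAddPoly Fq k h ∧ IsAddPoly Fq k t ∧
      f = h.comp g + t ∧ t.degree < g.degree := by
  obtain ⟨jb, hjb⟩ := hg g.natDegree (Polynomial.natDegree_mem_support_of_nonzero hg0)
  have hq1 : 1 < Fintype.card Fq := two_le_q Fq
  suffices H : ∀ N : ℕ, ∀ f : Polynomial k, IsAddPoly Fq k f → f.natDegree < N →
      ∃ h t : Polynomial k, IsAddPoly Fq k h ∧ IsAddPoly Fq k t ∧
        f = h.comp g + t ∧ t.degree < g.degree by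
    exact H (f.natDegree + 1) f hf (Nat.lt_succ_self _)
  intro N
  induction N with
  | zero => intro f _ hn; omega
  | succ N ih =>
    intro f hf hn
    by_cases hf0 : f = 0
    · refine ⟨0, 0, isAddPoly_zero Fq k, isAddPoly_zero Fq k, by simp [hf0], ?_⟩
      rw [Polynomial.degree_zero]
      exact Ne.bot_lt (fun h => hg0 (Polynomial.degree_eq_bot.mp h))
    by_cases hlt : f.degree < g.degree
    · exact ⟨0, f, isAddPoly_zero Fq k, hf, by simp, hlt⟩
    -- main case
    obtain ⟨ja, hja⟩ := hf f.natDegree (Polynomial.natDegree_mem_support_of_nonzero hf0)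
    have hdge : g.natDegree ≤ f.natDegree :=
      Polynomial.natDegree_le_natDegree (le_of_not_gt hlt)
    have hba : jb ≤ ja := by
      rw [hja, hjb] at hdge
      exact (Nat.pow_le_pow_iff_right hq1).mp hdge
    set e := ja - jb with he
    set c := f.leadingCoeff / g.leadingCoeff ^ (Fintype.card Fq ^ e) with hc
    have hlcf : f.leadingCoeff ≠ 0 := Polynomial.leadingCoeff_ne_zero.mpr hf0
    have hlcg : g.leadingCoeff ≠ 0 := Polynomial.leadingCoeff_ne_zero.mpr hg0
    have hlcgp : g.leadingCoeff ^ (Fintype.card Fq ^ e) ≠ 0 := pow_ne_zero _ hlcg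
    have hc0 : c ≠ 0 := div_ne_zero hlcf hlcgp
    set sub := Polynomial.C c * g ^ (Fintype.card Fq ^ e) with hsub
    have hgpow0 : g ^ (Fintype.card Fq ^ e) ≠ 0 := pow_ne_zero _ hg0
    have hsub0 : sub ≠ 0 := mul_ne_zero (by simpa using hc0) hgpow0
    have hlcp : (g ^ (Fintype.card Fq ^ e)).leadingCoeff
        = g.leadingCoeff ^ (Fintype.card Fq ^ e) := Polynomial.leadingCoeff_pow' hlcgp
    have hlcsub : sub.leadingCoeff = f.leadingCoeff := by
      rw [hsub, Polynomial.leadingCoeff_mul, Polynomial.leadingCoeff_C, hlcp, hc]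
      field_simp
    have hndsub : sub.natDegree = f.natDegree := by
      rw [hsub, Polynomial.natDegree_C_mul hc0, Polynomial.natDegree_pow' hlcgp]
      rw [hja, hjb, ← pow_add, Nat.sub_add_cancel hba]
    have hdsub : f.degree = sub.degree := by
      rw [Polynomial.degree_eq_natDegree hf0, Polynomial.degree_eq_natDegree hsub0, hndsub]
    have hdlt : (f - sub).degree < f.degree :=
      Polynomial.degree_sub_lt hdsub hf0 hlcsub.symm
    have hsubadd : IsAddPoly Fq k sub :=
      isAddPoly_C_mul Fq k c (isAddPoly_pow_q p m Fq k hFq hg e)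
    have hf'add : IsAddPoly Fq k (f - sub) := by
      rw [sub_eq_add_neg]
      exact isAddPoly_add Fq k hf (isAddPoly_neg Fq k hsubadd)
    have hcomp1 : (Polynomial.C c * Polynomial.X ^ (Fintype.card Fq ^ e)).comp g = sub := by
      rw [Polynomial.mul_comp, Polynomial.C_comp, Polynomial.X_pow_comp]
    by_cases hf'0 : f - sub = 0
    · refine ⟨Polynomial.C c * Polynomial.X ^ (Fintype.card Fq ^ e), 0,
        isAddPoly_monomial Fq k c e, isAddPoly_zero Fq k, ?_, ?_⟩
      · rw [hcomp1, add_zero, ← sub_eq_zero, hf'0]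
      · rw [Polynomial.degree_zero]
        exact Ne.bot_lt (fun h => hg0 (Polynomial.degree_eq_bot.mp h))
    · have hndlt : (f - sub).natDegree < N := by
        have := Polynomial.natDegree_lt_natDegree hf'0 hdlt
        omega
      obtain ⟨h', t, hh', ht, heq, htd⟩ := ih (f - sub) hf'add hndlt
      refine ⟨Polynomial.C c * Polynomial.X ^ (Fintype.card Fq ^ e) + h', t,
        isAddPoly_add Fq k (isAddPoly_monomial Fq k c e) hh', ht, ?_, htd⟩
      rw [Polynomial.add_comp, hcomp1]
      rw [sub_eq_iff_eq_add] at heq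
      rw [heq]; ring

end Aux4

end Drinfeld
namespace Drinfeld

section Aux5
set_option linter.unusedSectionVars false
set_option maxHeartbeats 1000000

variable (p m : ℕ) [Fact p.Prime]
variable (Fq k : Type) [Field Fq] [Fintype Fq] [Field k] [Fintype k] [CharP k p]
variable (hFq : Fintype.card Fq = p ^ m)

theorem mem_leftSpan_of_mem {I : Set (AddMonoid.End (Kb k))} {x : AddMonoid.End (Kb k)}
    (hx : x ∈ I) : x ∈ leftSpan p m Fq k hFq I :=
  AddSubgroup.subset_closure ⟨1, Subring.one_mem _, x, hx, (one_mul x).symm⟩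

theorem leftSpan_subset_skew {I : Set (AddMonoid.End (Kb k))}
    (hIs : I ⊆ (skewPoly p m Fq k hFq : Set (AddMonoid.End (Kb k))))
    {x : AddMonoid.End (Kb k)} (hx : x ∈ leftSpan p m Fq k hFq I) :
    x ∈ skewPoly p m Fq k hFq := by
  refine AddSubgroup.closure_induction ?_ ?_ ?_ ?_ hx
  · rintro y ⟨w, hw, z, hz, rfl⟩
    exact Subring.mul_mem _ hw (hIs hz)
  · exact Subring.zero_mem _
  · intro a b _ _ ha hb; exact Subring.add_mem _ ha hb
  · intro a _ ha; exact Subring.neg_mem _ ha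

theorem mul_mem_leftSpan {I : Set (AddMonoid.End (Kb k))}
    {w x : AddMonoid.End (Kb k)} (hw : w ∈ skewPoly p m Fq k hFq)
    (hx : x ∈ leftSpan p m Fq k hFq I) : w * x ∈ leftSpan p m Fq k hFq I := by
  have : ∀ v ∈ skewPoly p m Fq k hFq, v * x ∈ leftSpan p m Fq k hFq I := by
    refine AddSubgroup.closure_induction
      (p := fun y _ => ∀ v ∈ skewPoly p m Fq k hFq, v * y ∈ leftSpan p m Fq k hFq I)
      ?_ ?_ ?_ ?_ hx
    · rintro y ⟨w', hw', z, hz, rfl⟩ v hv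
      exact AddSubgroup.subset_closure ⟨v * w', Subring.mul_mem _ hv hw', z, hz,
        (mul_assoc v w' z).symm⟩
    · intro v _; rw [mul_zero]; exact AddSubgroup.zero_mem _
    · intro a b _ _ ha hb v hv
      rw [mul_add]; exact AddSubgroup.add_mem _ (ha v hv) (hb v hv)
    · intro a _ ha v hv
      convert AddSubgroup.neg_mem _ (ha v hv) using 1; exact mul_neg v a
  exact this w hw

include hFq in
theorem leftSpan_toPoly_mem_span {I : Set (AddMonoid.End (Kb k))}
    (hIs : I ⊆ (skewPoly p m Fq k hFq : Set (AddMonoid.End (Kb k))))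
    {x : AddMonoid.End (Kb k)} (hx : x ∈ leftSpan p m Fq k hFq I) :
    ∃ P : Polynomial k, IsAddPoly Fq k P ∧ IndBy k x P ∧
      P ∈ Ideal.span (toPoly k '' I) := by
  refine AddSubgroup.closure_induction ?_ ?_ ?_ ?_ hx
  · rintro y ⟨w, hw, z, hz, rfl⟩
    obtain ⟨Pw, hPw, hiw⟩ := skew_isAddPoly p m Fq k hFq hw
    obtain ⟨Pz, hPz, hiz⟩ := skew_isAddPoly p m Fq k hFq (hIs hz)
    refine ⟨Pw.comp Pz, isAddPoly_comp p m Fq k hFq hPw hPz, indBy_mul k hiw hiz, ?_⟩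
    have h1 : Pw.comp Pz ∈ Ideal.span {Pz} := comp_mem_span Fq k hPw
    have h2 : Ideal.span {Pz} ≤ Ideal.span (toPoly k '' I) := by
      apply Ideal.span_mono
      rw [Set.singleton_subset_iff]
      exact ⟨z, hz, indBy_toPoly k hiz⟩
    exact h2 h1
  · exact ⟨0, isAddPoly_zero Fq k, indBy_zero k, Ideal.zero_mem _⟩
  · rintro a b _ _ ⟨P, hP, hiP, hmP⟩ ⟨Q, hQ, hiQ, hmQ⟩
    exact ⟨P + Q, isAddPoly_add Fq k hP hQ, indBy_add k hiP hiQ, Ideal.add_mem _ hmP hmQ⟩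
  · rintro a _ ⟨P, hP, hiP, hmP⟩
    exact ⟨-P, isAddPoly_neg Fq k hP, indBy_neg k hiP, Submodule.neg_mem _ hmP⟩

include hFq in
/-- The key structure theorem for `k{τ}I` in terms of additive polynomials. -/
theorem mem_leftSpan_iff {I : Set (AddMonoid.End (Kb k))}
    (hIs : I ⊆ (skewPoly p m Fq k hFq : Set (AddMonoid.End (Kb k))))
    (hne : ∃ α ∈ I, α ≠ 0) {x : AddMonoid.End (Kb k)} (hx : x ∈ skewPoly p m Fq k hFq) :
    x ∈ leftSpan p m Fq k hFq I ↔ toPoly k x ∈ Ideal.span (toPoly k '' I) := by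
  constructor
  · intro h
    obtain ⟨P, _, hiP, hmP⟩ := leftSpan_toPoly_mem_span p m Fq k hFq hIs h
    rwa [indBy_toPoly k hiP]
  · intro hmem
    -- the minimal-degree nonzero element of `k{τ}I`
    set S : Set ℕ := {n | ∃ y ∈ leftSpan p m Fq k hFq I, y ≠ 0 ∧ (toPoly k y).natDegree = n}
      with hS
    have hSne : S.Nonempty := by
      obtain ⟨α, hα, hα0⟩ := hne
      exact ⟨(toPoly k α).natDegree, α, mem_leftSpan_of_mem p m Fq k hFq hα, hα0, rfl⟩
    obtain ⟨x₀, hx₀mem, hx₀0, hx₀deg⟩ := Nat.sInf_mem hSne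
    have hmin : ∀ y ∈ leftSpan p m Fq k hFq I, y ≠ 0 →
        (toPoly k x₀).natDegree ≤ (toPoly k y).natDegree := by
      intro y hy hy0
      rw [hx₀deg]
      exact Nat.sInf_le ⟨y, hy, hy0, rfl⟩
    obtain ⟨g, hgadd, hig⟩ := skew_isAddPoly p m Fq k hFq
      (leftSpan_subset_skew p m Fq k hFq hIs hx₀mem)
    have hgt : toPoly k x₀ = g := indBy_toPoly k hig
    have hg0 : g ≠ 0 := by
      intro h
      exact hx₀0 (indBy_ext k (h ▸ hig) (indBy_zero k))
    -- Claim A: every element of `k{τ}I` is a twisted multiple of `x₀`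
    have claimA : ∀ y ∈ leftSpan p m Fq k hFq I, ∃ h : Polynomial k, IsAddPoly Fq k h ∧
        toPoly k y = h.comp g := by
      intro y hy
      obtain ⟨Py, hPyadd, hiy⟩ := skew_isAddPoly p m Fq k hFq
        (leftSpan_subset_skew p m Fq k hFq hIs hy)
      obtain ⟨h, t, hhadd, htadd, heq, htdeg⟩ := twisted_div p m Fq k hFq hPyadd hgadd hg0
      obtain ⟨uh, huh, hiuh⟩ := exists_skew_of_isAddPoly p m Fq k hFq hhadd
      have hit : IndBy k (y - uh * x₀) t := by
        have := indBy_add k hiy (indBy_neg k (indBy_mul k hiuh hig))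
        rw [heq] at this
        have h2 : h.comp g + t + -h.comp g = t := by ring
        rwa [h2, ← sub_eq_add_neg] at this
      have ht0 : t = 0 := by
        by_contra ht0
        have hyu : y - uh * x₀ ≠ 0 := by
          intro h0
          exact ht0 (indBy_eq_zero k hit h0)
        have hmem' : y - uh * x₀ ∈ leftSpan p m Fq k hFq I :=
          AddSubgroup.sub_mem _ hy (mul_mem_leftSpan p m Fq k hFq huh hx₀mem)
        have hle := hmin _ hmem' hyu
        rw [hgt, indBy_toPoly k hit] at hle
        have : t.natDegree < g.natDegree :=
          Polynomial.natDegree_lt_natDegree ht0 htdeg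
        omega
      refine ⟨h, hhadd, ?_⟩
      rw [indBy_toPoly k hiy, heq, ht0, add_zero]
    -- Claim B: the ideal is generated by `g`
    have claimB : Ideal.span (toPoly k '' I) = Ideal.span {g} := by
      apply le_antisymm
      · rw [Ideal.span_le]
        rintro _ ⟨α, hα, rfl⟩
        obtain ⟨h, hhadd, hht⟩ := claimA α (mem_leftSpan_of_mem p m Fq k hFq hα)
        rw [hht]
        exact comp_mem_span Fq k hhadd
      · rw [Ideal.span_le, Set.singleton_subset_iff, ← hgt]
        obtain ⟨P, _, hiP, hmP⟩ := leftSpan_toPoly_mem_span p m Fq k hFq hIs hx₀mem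
        rwa [indBy_toPoly k hiP]
    -- Now divide `toPoly x` by `g`
    obtain ⟨Px, hPxadd, hix⟩ := skew_isAddPoly p m Fq k hFq hx
    rw [indBy_toPoly k hix, claimB, Ideal.mem_span_singleton] at hmem
    obtain ⟨h, t, hhadd, htadd, heq, htdeg⟩ := twisted_div p m Fq k hFq hPxadd hgadd hg0
    have hgt' : g ∣ t := by
      have h1 : g ∣ h.comp g := Ideal.mem_span_singleton.mp (comp_mem_span Fq k hhadd)
      have h2 : t = Px - h.comp g := by rw [heq]; ring
      rw [h2]
      exact dvd_sub hmem h1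
    have ht0 : t = 0 := by
      by_contra ht0
      exact absurd htdeg (not_lt.mpr (Polynomial.degree_le_of_dvd hgt' ht0))
    obtain ⟨uh, huh, hiuh⟩ := exists_skew_of_isAddPoly p m Fq k hFq hhadd
    have : x = uh * x₀ := by
      apply indBy_ext k hix
      rw [heq, ht0, add_zero]
      exact indBy_mul k hiuh hig
    rw [this]
    exact mul_mem_leftSpan p m Fq k hFq huh hx₀mem

end Aux5

end Drinfeld
namespace Drinfeld

section Aux6
set_option linter.unusedSectionVars false
set_option maxHeartbeats 1000000

variable (p m : ℕ) [Fact p.Prime]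
variable (Fq k : Type) [Field Fq] [Fintype Fq] [Field k] [Fintype k] [CharP k p]
variable (hFq : Fintype.card Fq = p ^ m)

include hFq in
theorem surj_of_indBy {u : AddMonoid.End (Kb k)} {P : Polynomial k}
    (hiP : IndBy k u P) (hadd : IsAddPoly Fq k P) (hP0 : P ≠ 0) :
    Function.Surjective u := by
  intro y
  obtain ⟨j, hj⟩ := hadd P.natDegree (Polynomial.natDegree_mem_support_of_nonzero hP0)
  have hq1 : 1 < Fintype.card Fq := two_le_q Fq
  have hdeg1 : 1 ≤ P.natDegree := by
    rw [hj]; exact Nat.one_le_pow _ _ (by omega)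
  set Q : Polynomial (Kb k) := P.map (algebraMap k (Kb k)) with hQ
  have hQ0 : Q ≠ 0 :=
    Polynomial.map_ne_zero_iff (algebraMap k (Kb k)).injective |>.mpr hP0
  have hQdeg : 0 < Q.degree := by
    rw [hQ, Polynomial.degree_map_eq_of_injective (algebraMap k (Kb k)).injective,
      Polynomial.degree_eq_natDegree hP0]
    exact_mod_cast hdeg1
  have hsub : (Q - Polynomial.C y).degree ≠ 0 := by
    rw [Polynomial.degree_sub_C hQdeg]
    exact hQdeg.ne'
  obtain ⟨z, hz⟩ := IsAlgClosed.exists_root (Q - Polynomial.C y) hsub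
  refine ⟨z, ?_⟩
  have : Polynomial.eval z Q - y = 0 := by
    simpa [Polynomial.IsRoot, Polynomial.eval_sub] using hz
  have h2 : Polynomial.aeval z P = Polynomial.eval z Q := by
    rw [hQ, Polynomial.aeval_def, Polynomial.eval_map]
  rw [← hiP z, h2]
  exact sub_eq_zero.mp this

include hFq in
theorem phi_poly {γ : Polynomial Fq →+* k} {r : ℕ} (φ : DrinfeldModule p m Fq k hFq γ r)
    (a : Polynomial Fq) :
    ∃ P : Polynomial k, IsAddPoly Fq k P ∧ IndBy k (φ.toRingHom a) P ∧
      (a ≠ 0 → P ≠ 0) := by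
  classical
  set c := φ.coeffs a with hc
  set P : Polynomial k := ∑ i ∈ c.support, Polynomial.C (c i) *
    Polynomial.X ^ (Fintype.card Fq ^ i) with hP
  have haddP : IsAddPoly Fq k P := by
    apply isAddPoly_sum
    intro n _
    exact isAddPoly_monomial Fq k _ _
  have hind : IndBy k (φ.toRingHom a) P := by
    intro x
    rw [φ.eq_ofCoeffs a]
    have h1 : ofCoeffs p m Fq k hFq c x
        = ∑ i ∈ c.support, (AddMonoidHom.eval x) (ml k (c i) * tau p m Fq k hFq ^ i) := by
      exact map_sum (AddMonoidHom.eval x) _ c.support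
    rw [h1]
    rw [hP, map_sum]
    refine Finset.sum_congr rfl fun i _ => ?_
    have h2 : (AddMonoidHom.eval x) (ml k (c i) * tau p m Fq k hFq ^ i)
        = ml k (c i) ((tau p m Fq k hFq ^ i) x) := rfl
    rw [h2, tau_pow_apply, ml_apply]
    simp [Algebra.smul_def]
  refine ⟨P, haddP, hind, ?_⟩
  intro ha0
  have hsupp : r * a.natDegree ∈ c.support := by
    rw [Finsupp.mem_support_iff]
    exact φ.coeff_top a ha0
  have hcoeff : P.coeff (Fintype.card Fq ^ (r * a.natDegree)) = c (r * a.natDegree) := by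
    rw [hP, Polynomial.finset_sum_coeff]
    rw [Finset.sum_eq_single (r * a.natDegree)]
    · rw [Polynomial.coeff_C_mul, Polynomial.coeff_X_pow, if_pos rfl, mul_one]
    · intro i _ hne
      rw [Polynomial.coeff_C_mul, Polynomial.coeff_X_pow, if_neg, mul_zero]
      intro h
      exact hne (Nat.pow_right_injective (two_le_q Fq) h).symm
    · intro h; exact absurd hsupp h
  intro h0
  rw [h0, Polynomial.coeff_zero] at hcoeff
  exact φ.coeff_top a ha0 hcoeff.symm

include hFq in
theorem phi_surj {γ : Polynomial Fq →+* k} {r : ℕ} (φ : DrinfeldModule p m Fq k hFq γ r)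
    {a : Polynomial Fq} (ha : a ≠ 0) : Function.Surjective (φ.toRingHom a) := by
  obtain ⟨P, hadd, hind, hne⟩ := phi_poly p m Fq k hFq φ a
  exact surj_of_indBy p m Fq k hFq hind hadd (hne ha)

include hFq in
theorem phi_mem_skew {γ : Polynomial Fq →+* k} {r : ℕ} (φ : DrinfeldModule p m Fq k hFq γ r)
    (a : Polynomial Fq) : φ.toRingHom a ∈ skewPoly p m Fq k hFq := by
  obtain ⟨P, hadd, hind, _⟩ := phi_poly p m Fq k hFq φ a
  exact mem_skew_of_indBy p m Fq k hFq hadd hind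

theorem endRing_subset_skew {γ : Polynomial Fq →+* k} {r : ℕ}
    (φ : DrinfeldModule p m Fq k hFq γ r) {x : AddMonoid.End (Kb k)}
    (hx : x ∈ EndRing p m Fq k hFq φ) : x ∈ skewPoly p m Fq k hFq :=
  (Subring.mem_inf.mp hx).1

include hFq in
theorem memD_to_endRing {γ : Polynomial Fq →+* k} {r : ℕ}
    (φ : DrinfeldModule p m Fq k hFq γ r) {x : AddMonoid.End (Kb k)}
    (hx : x ∈ skewPoly p m Fq k hFq) (hD : MemD p m Fq k hFq φ x) :
    x ∈ EndRing p m Fq k hFq φ := by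
  obtain ⟨a, ha0, haE⟩ := hD
  rw [EndRing, Subring.mem_inf]
  refine ⟨hx, ?_⟩
  rw [Subring.mem_centralizer_iff]
  rintro _ ⟨b, rfl⟩
  -- φ_b * x = x * φ_b
  have hcent := (Subring.mem_inf.mp haE).2
  rw [Subring.mem_centralizer_iff] at hcent
  have h1 : φ.toRingHom b * (x * φ.toRingHom a) = (x * φ.toRingHom a) * φ.toRingHom b :=
    hcent _ ⟨b, rfl⟩
  have h2 : φ.toRingHom a * φ.toRingHom b = φ.toRingHom b * φ.toRingHom a := by
    rw [← map_mul, ← map_mul, mul_comm]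
  have h3 : (φ.toRingHom b * x) * φ.toRingHom a = (x * φ.toRingHom b) * φ.toRingHom a := by
    calc (φ.toRingHom b * x) * φ.toRingHom a
        = φ.toRingHom b * (x * φ.toRingHom a) := mul_assoc _ _ _
    _ = x * φ.toRingHom a * φ.toRingHom b := h1
    _ = x * (φ.toRingHom a * φ.toRingHom b) := mul_assoc _ _ _
    _ = x * (φ.toRingHom b * φ.toRingHom a) := by rw [h2]
    _ = (x * φ.toRingHom b) * φ.toRingHom a := (mul_assoc _ _ _).symm
  have hsurj := phi_surj p m Fq k hFq φ ha0
  refine AddMonoidHom.ext fun z => ?_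
  obtain ⟨w, hw⟩ := hsurj z
  have h4 : ((φ.toRingHom b * x) * φ.toRingHom a) w = ((x * φ.toRingHom b) * φ.toRingHom a) w := by
    rw [h3]
  have h5 : ((φ.toRingHom b * x) * φ.toRingHom a) w = (φ.toRingHom b * x) z := by
    show (φ.toRingHom b * x) (φ.toRingHom a w) = _
    rw [hw]
  have h6 : ((x * φ.toRingHom b) * φ.toRingHom a) w = (x * φ.toRingHom b) z := by
    show (x * φ.toRingHom b) (φ.toRingHom a w) = _
    rw [hw]
  exact h5.symm.trans (h4.trans h6)

end Aux6

end Drinfeld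

namespace Drinfeld

/-- For every nonzero ideal `I` of `E = End_k(φ)` (assumed commutative):
the annihilator `Ann_E(φ[I]) = {u ∈ E : u(X) ∈ J_I}` (where `J_I ⊴ k[X]` is generated by
the additive polynomials `α(X)`, `α ∈ I`) equals `(k{τ}I) ∩ D`, which also equals
`(k{τ}I) ∩ E`.  Consequently `(k{τ}I) ∩ D = I` iff `I = Ann_E(φ[I])`: the two definitions
of a kernel ideal agree.  (Membership in `D = Frac(E)` is encoded by `MemD`.) -/
theorem statement10
    (p m : ℕ) [Fact p.Prime] (Fq k : Type) [Field Fq] [Fintype Fq]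
    [Field k] [Fintype k] [CharP k p] (hFq : Fintype.card Fq = p ^ m)
    (γ : Polynomial Fq →+* k) (r : ℕ) (φ : DrinfeldModule p m Fq k hFq γ r)
    (hcomm : ∀ x ∈ EndRing p m Fq k hFq φ, ∀ y ∈ EndRing p m Fq k hFq φ, x * y = y * x)
    (I : Set (AddMonoid.End (Kb k)))
    (hI : IsIdealOf k (EndRing p m Fq k hFq φ) I) (hI0 : I ≠ {0}) :
    ({x | x ∈ EndRing p m Fq k hFq φ ∧ toPoly k x ∈ Ideal.span (toPoly k '' I)} =
        {x | x ∈ leftSpan p m Fq k hFq I ∧ MemD p m Fq k hFq φ x}) ∧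
      ({x | x ∈ leftSpan p m Fq k hFq I ∧ MemD p m Fq k hFq φ x} =
        {x | x ∈ leftSpan p m Fq k hFq I ∧ x ∈ EndRing p m Fq k hFq φ}) ∧
      (IsKernelIdeal p m Fq k hFq φ I ↔
        {x | x ∈ EndRing p m Fq k hFq φ ∧ toPoly k x ∈ Ideal.span (toPoly k '' I)} = I) := by

  have hIs : I ⊆ (skewPoly p m Fq k hFq : Set (AddMonoid.End (Kb k))) :=
    fun x hx => endRing_subset_skew p m Fq k hFq φ (hI.1 hx)
  have hne : ∃ α ∈ I, α ≠ 0 := by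
    by_contra h
    push_neg at h
    exact hI0 (Set.eq_singleton_iff_unique_mem.mpr ⟨hI.2.1, fun x hx => h x hx⟩)
  have eq2 : {x | x ∈ leftSpan p m Fq k hFq I ∧ MemD p m Fq k hFq φ x} =
      {x | x ∈ leftSpan p m Fq k hFq I ∧ x ∈ EndRing p m Fq k hFq φ} := by
    ext x
    simp only [Set.mem_setOf_eq]
    constructor
    · rintro ⟨hl, hd⟩
      exact ⟨hl, memD_to_endRing p m Fq k hFq φ
        (leftSpan_subset_skew p m Fq k hFq hIs hl) hd⟩
    · rintro ⟨hl, hE⟩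
      exact ⟨hl, 1, one_ne_zero, by rw [map_one, mul_one]; exact hE⟩
  have eq1 : {x | x ∈ EndRing p m Fq k hFq φ ∧ toPoly k x ∈ Ideal.span (toPoly k '' I)} =
      {x | x ∈ leftSpan p m Fq k hFq I ∧ MemD p m Fq k hFq φ x} := by
    rw [eq2]
    ext x
    simp only [Set.mem_setOf_eq]
    constructor
    · rintro ⟨hE, hspan⟩
      exact ⟨(mem_leftSpan_iff p m Fq k hFq hIs hne
        (endRing_subset_skew p m Fq k hFq φ hE)).mpr hspan, hE⟩
    · rintro ⟨hl, hE⟩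
      exact ⟨hE, (mem_leftSpan_iff p m Fq k hFq hIs hne
        (leftSpan_subset_skew p m Fq k hFq hIs hl)).mp hl⟩
  refine ⟨eq1, eq2, ?_⟩
  unfold IsKernelIdeal
  rw [eq1]


end Drinfeld
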